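/- arXiv:2410.18609 — 3 statements merged into one kernel-verified Lean document; each statement's English description precedes it below -/
import Mathlib

section
/- Let x : ℝ² → ℝ³ and ψ = (ψ₁,ψ₂) : ℝ² → ℝ² be twice differentiable maps, and set y = x ∘ ψ. At every point (t,s) where det J(t,s) > 0 and x_t × x_s ≠ 0 at ψ(t,s), the Weingarten matrix satisfies W_y(t,s) = J(t,s)⁻¹ · W_x(ψ(t,s)) · J(t,s), where J(t,s) is the Jacobian matrix of ψ at (t,s). -/
open Matrix

noncomputable section

/-- ℝ³ with the standard (Euclidean) inner product. -/
abbrev E3 := EuclideanSpace ℝ (Fin 3)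

/-- Cross product in ℝ³. -/
def cross (u v : E3) : E3 := WithLp.toLp 2 (crossProduct u v)

/-- Matrix–vector product `A·u`. -/
def mvec (A : Matrix (Fin 3) (Fin 3) ℝ) (u : E3) : E3 := WithLp.toLp 2 (A.mulVec u)

/-- First partial derivative `x_t` at `p`. -/
def pt (x : ℝ × ℝ → E3) (p : ℝ × ℝ) : E3 := fderiv ℝ x p (1, 0)

/-- First partial derivative `x_s` at `p`. -/
def ps (x : ℝ × ℝ → E3) (p : ℝ × ℝ) : E3 := fderiv ℝ x p (0, 1)

/-- Coefficient `E = x_t · x_t` of the first fundamental form. -/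
def coeffE (x : ℝ × ℝ → E3) (p : ℝ × ℝ) : ℝ := inner ℝ (pt x p) (pt x p)

/-- Coefficient `F = x_t · x_s` of the first fundamental form. -/
def coeffF (x : ℝ × ℝ → E3) (p : ℝ × ℝ) : ℝ := inner ℝ (pt x p) (ps x p)

/-- Coefficient `G = x_s · x_s` of the first fundamental form. -/
def coeffG (x : ℝ × ℝ → E3) (p : ℝ × ℝ) : ℝ := inner ℝ (ps x p) (ps x p)

/-- The first fundamental form `I_x = [[E,F],[F,G]]` at `p`. -/
def firstFF (x : ℝ × ℝ → E3) (p : ℝ × ℝ) : Matrix (Fin 2) (Fin 2) ℝ :=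
  !![coeffE x p, coeffF x p; coeffF x p, coeffG x p]

/-- The unit normal `n_x = (x_t × x_s)/‖x_t × x_s‖` at `p`. -/
def nrm (x : ℝ × ℝ → E3) (p : ℝ × ℝ) : E3 :=
  ‖cross (pt x p) (ps x p)‖⁻¹ • cross (pt x p) (ps x p)

/-- Coefficient `L = x_tt · n_x` of the second fundamental form. -/
def coeffL (x : ℝ × ℝ → E3) (p : ℝ × ℝ) : ℝ := inner ℝ (pt (pt x) p) (nrm x p)

/-- Coefficient `M = x_ts · n_x` of the second fundamental form. -/
def coeffM (x : ℝ × ℝ → E3) (p : ℝ × ℝ) : ℝ := inner ℝ (ps (pt x) p) (nrm x p)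

/-- Coefficient `N = x_ss · n_x` of the second fundamental form. -/
def coeffN (x : ℝ × ℝ → E3) (p : ℝ × ℝ) : ℝ := inner ℝ (ps (ps x) p) (nrm x p)

/-- The second fundamental form `II_x = [[L,M],[M,N]]` at `p`. -/
def secondFF (x : ℝ × ℝ → E3) (p : ℝ × ℝ) : Matrix (Fin 2) (Fin 2) ℝ :=
  !![coeffL x p, coeffM x p; coeffM x p, coeffN x p]

/-- The Weingarten matrix `W_x = I_x⁻¹ · II_x` at `p`. -/
def wein (x : ℝ × ℝ → E3) (p : ℝ × ℝ) : Matrix (Fin 2) (Fin 2) ℝ :=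
  (firstFF x p)⁻¹ * secondFF x p

/-- The Gauss curvature `K_x = (LN − M²)/(EG − F²)` at `p`. -/
def gauss (x : ℝ × ℝ → E3) (p : ℝ × ℝ) : ℝ :=
  (coeffL x p * coeffN x p - coeffM x p ^ 2) / (coeffE x p * coeffG x p - coeffF x p ^ 2)

/-- The mean curvature `H_x = (EN + GL − 2FM)/(2(EG − F²))` at `p`. -/
def mean (x : ℝ × ℝ → E3) (p : ℝ × ℝ) : ℝ :=
  (coeffE x p * coeffN x p + coeffG x p * coeffL x p - 2 * coeffF x p * coeffM x p) /
    (2 * (coeffE x p * coeffG x p - coeffF x p ^ 2))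

/-- The Jacobian matrix of `ψ : ℝ² → ℝ²` at `p`. -/
def jac (ψ : ℝ × ℝ → ℝ × ℝ) (p : ℝ × ℝ) : Matrix (Fin 2) (Fin 2) ℝ :=
  !![(fderiv ℝ ψ p (1, 0)).1, (fderiv ℝ ψ p (0, 1)).1;
     (fderiv ℝ ψ p (1, 0)).2, (fderiv ℝ ψ p (0, 1)).2]

/-!
Both fundamental forms are coordinate matrices of bilinear forms on the parameter plane:
`I_x` of `(u, v) ↦ ⟪Dx u, Dx v⟫` and `II_x` of `(u, v) ↦ ⟪n_x, D²x u v⟫`. Under `y = x ∘ ψ` the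
first pulls back along `Dψ`, so `I_y = Jᵀ I_x J`. Since `y_t × y_s = det J • (x_t × x_s)` with
`det J > 0`, the unit normals agree, and in `D²y = D²x (Dψ ·) (Dψ ·) + Dx (D²ψ · ·)` the second
term is tangent, so also `II_y = Jᵀ II_x J`. Hence `W_y = (Jᵀ I_x J)⁻¹ Jᵀ II_x J = J⁻¹ W_x J`.
-/

open RealInnerProductSpace Module

section SecondDerivative

variable {𝕜 E F G : Type*} [NontriviallyNormedField 𝕜] [NormedAddCommGroup E] [NormedSpace 𝕜 E]
  [NormedAddCommGroup F] [NormedSpace 𝕜 F] [NormedAddCommGroup G] [NormedSpace 𝕜 G]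

lemma fderiv_fderiv_apply_right {f : E → F} {q : E} (hf : DifferentiableAt 𝕜 (fderiv 𝕜 f) q)
    (v w : E) : fderiv 𝕜 (fun z => fderiv 𝕜 f z v) q w = fderiv 𝕜 (fderiv 𝕜 f) q w v := by
  rw [fderiv_clm_apply hf (differentiableAt_const v)]
  simp

lemma fderiv_fderiv_comp_apply {f : F → G} {g : E → F} (hf : ContDiff 𝕜 2 f) (hg : ContDiff 𝕜 2 g)
    (p v w : E) :
    fderiv 𝕜 (fun z => fderiv 𝕜 (f ∘ g) z v) p w =
      fderiv 𝕜 (fderiv 𝕜 f) (g p) (fderiv 𝕜 g p w) (fderiv 𝕜 g p v) +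
        fderiv 𝕜 f (g p) (fderiv 𝕜 (fderiv 𝕜 g) p w v) := by
  have hf1 : Differentiable 𝕜 f := hf.differentiable two_ne_zero
  have hg1 : Differentiable 𝕜 g := hg.differentiable two_ne_zero
  have hf2 : Differentiable 𝕜 (fderiv 𝕜 f) :=
    (hf.fderiv_right (m := 1) le_rfl).differentiable one_ne_zero
  have hg2 : Differentiable 𝕜 (fderiv 𝕜 g) :=
    (hg.fderiv_right (m := 1) le_rfl).differentiable one_ne_zero
  have hchain : (fun z => fderiv 𝕜 (f ∘ g) z v) = fun z => fderiv 𝕜 f (g z) (fderiv 𝕜 g z v) :=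
    funext fun z => by rw [fderiv_comp z (hf1 _) (hg1 z)]; rfl
  rw [hchain, fderiv_clm_apply (c := fun z => fderiv 𝕜 f (g z)) ((hf2 _).comp p (hg1 p))
      ((hg2 p).clm_apply (differentiableAt_const v)), fderiv_fun_comp p (hf2 _) (hg1 p)]
  simp only [_root_.add_apply, ContinuousLinearMap.comp_apply,
    ContinuousLinearMap.flip_apply, fderiv_fderiv_apply_right (hg2 p) v w]
  abel

end SecondDerivative

theorem Matrix.inv_transpose_conj_mul_transpose_conj {n R : Type*} [Fintype n] [DecidableEq n]
    [CommRing R] {J : Matrix n n R} (hJ : IsUnit J.det) (A B : Matrix n n R) :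
    (Jᵀ * A * J)⁻¹ * (Jᵀ * B * J) = J⁻¹ * (A⁻¹ * B) * J := by
  rw [Matrix.mul_inv_rev, Matrix.mul_inv_rev]
  simp only [Matrix.mul_assoc]
  rw [← Matrix.mul_assoc Jᵀ⁻¹, Matrix.nonsing_inv_mul _ (by rwa [det_transpose]), Matrix.one_mul]

lemma cross_smul_add_smul (a b c d : ℝ) (u v : E3) :
    cross (a • u + c • v) (b • u + d • v) = (a * d - c * b) • cross u v := by
  simp only [cross, WithLp.ofLp_add, WithLp.ofLp_smul, map_add, map_smul, LinearMap.add_apply,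
    LinearMap.smul_apply, cross_self, ← cross_anticomm u v]
  rw [← WithLp.toLp_smul]
  congr 1
  module

lemma inner_self_cross (u v : E3) : ⟪u, cross u v⟫ = 0 := by
  rw [cross, EuclideanSpace.inner_eq_star_dotProduct, star_trivial, dotProduct_comm]
  exact dot_self_cross _ _

lemma inner_cross_self (u v : E3) : ⟪v, cross u v⟫ = 0 := by
  rw [cross, EuclideanSpace.inner_eq_star_dotProduct, star_trivial, dotProduct_comm]
  exact dot_cross_self _ _

lemma fderiv_apply_eq_pt_ps (x : ℝ × ℝ → E3) (q w : ℝ × ℝ) :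
    fderiv ℝ x q w = w.1 • pt x q + w.2 • ps x q := by
  conv_lhs => rw [show w = w.1 • ((1 : ℝ), (0 : ℝ)) + w.2 • ((0 : ℝ), (1 : ℝ)) by simp]
  rw [map_add, map_smul, map_smul, pt, ps]

lemma inner_fderiv_nrm (x : ℝ × ℝ → E3) (q w : ℝ × ℝ) : ⟪fderiv ℝ x q w, nrm x q⟫ = 0 := by
  simp only [fderiv_apply_eq_pt_ps, nrm, inner_add_left, real_inner_smul_left,
    real_inner_smul_right, inner_self_cross, inner_cross_self, mul_zero, add_zero]

lemma pt_comp {x : ℝ × ℝ → E3} {ψ : ℝ × ℝ → ℝ × ℝ} {p : ℝ × ℝ}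
    (hx : DifferentiableAt ℝ x (ψ p)) (hψ : DifferentiableAt ℝ ψ p) :
    pt (x ∘ ψ) p = jac ψ p 0 0 • pt x (ψ p) + jac ψ p 1 0 • ps x (ψ p) := by
  rw [pt, fderiv_comp p hx hψ, ContinuousLinearMap.comp_apply, fderiv_apply_eq_pt_ps]; rfl

lemma ps_comp {x : ℝ × ℝ → E3} {ψ : ℝ × ℝ → ℝ × ℝ} {p : ℝ × ℝ}
    (hx : DifferentiableAt ℝ x (ψ p)) (hψ : DifferentiableAt ℝ ψ p) :
    ps (x ∘ ψ) p = jac ψ p 0 1 • pt x (ψ p) + jac ψ p 1 1 • ps x (ψ p) := by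
  rw [ps, fderiv_comp p hx hψ, ContinuousLinearMap.comp_apply, fderiv_apply_eq_pt_ps]; rfl

lemma nrm_comp {x : ℝ × ℝ → E3} {ψ : ℝ × ℝ → ℝ × ℝ} {p : ℝ × ℝ}
    (hx : DifferentiableAt ℝ x (ψ p)) (hψ : DifferentiableAt ℝ ψ p) (hJ : 0 < (jac ψ p).det) :
    nrm (x ∘ ψ) p = nrm x (ψ p) := by
  have hcross : cross (pt (x ∘ ψ) p) (ps (x ∘ ψ) p) =
      (jac ψ p).det • cross (pt x (ψ p)) (ps x (ψ p)) := by
    rw [pt_comp hx hψ, ps_comp hx hψ, cross_smul_add_smul, det_fin_two, mul_comm (jac ψ p 1 0)]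
  exact (congrArg NormedSpace.normalize hcross).trans (NormedSpace.normalize_smul_of_pos hJ _)

lemma jac_eq_toMatrix (ψ : ℝ × ℝ → ℝ × ℝ) (p : ℝ × ℝ) :
    jac ψ p =
      LinearMap.toMatrix (Basis.finTwoProd ℝ) (Basis.finTwoProd ℝ) (fderiv ℝ ψ p) := by
  ext i j
  fin_cases i <;> fin_cases j <;> simp [jac, LinearMap.toMatrix_apply]

lemma firstFF_eq_toMatrix₂ (x : ℝ × ℝ → E3) (q : ℝ × ℝ) :
    firstFF x q = LinearMap.toMatrix₂ (Basis.finTwoProd ℝ) (Basis.finTwoProd ℝ)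
      ((innerₗ E3).compl₁₂ (fderiv ℝ x q : ℝ × ℝ →ₗ[ℝ] E3) (fderiv ℝ x q : ℝ × ℝ →ₗ[ℝ] E3)) := by
  ext i j
  fin_cases i <;> fin_cases j <;>
    simp [firstFF, coeffE, coeffF, coeffG, pt, ps, LinearMap.toMatrix₂_apply, real_inner_comm]

lemma firstFF_comp {x : ℝ × ℝ → E3} {ψ : ℝ × ℝ → ℝ × ℝ} {p : ℝ × ℝ}
    (hx : DifferentiableAt ℝ x (ψ p)) (hψ : DifferentiableAt ℝ ψ p) :
    firstFF (x ∘ ψ) p = (jac ψ p)ᵀ * firstFF x (ψ p) * jac ψ p := by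
  rw [firstFF_eq_toMatrix₂, firstFF_eq_toMatrix₂, jac_eq_toMatrix, ← LinearMap.toMatrix₂_compl₁₂,
    fderiv_comp p hx hψ]
  rfl

def secondFormAlong (x : ℝ × ℝ → E3) (q : ℝ × ℝ) (ν : E3) : ℝ × ℝ →ₗ[ℝ] ℝ × ℝ →ₗ[ℝ] ℝ :=
  ((ContinuousLinearMap.coeLM ℝ).comp
    (fderiv ℝ (fderiv ℝ x) q : ℝ × ℝ →ₗ[ℝ] ℝ × ℝ →L[ℝ] E3)).compr₂ (innerₗ E3 ν)

lemma secondFormAlong_apply (x : ℝ × ℝ → E3) (q : ℝ × ℝ) (ν : E3) (u v : ℝ × ℝ) :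
    secondFormAlong x q ν u v = ⟪ν, fderiv ℝ (fderiv ℝ x) q u v⟫ := rfl

lemma secondFF_eq_toMatrix₂ {x : ℝ × ℝ → E3} {q : ℝ × ℝ} (hx : ContDiffAt ℝ 2 x q) :
    secondFF x q = LinearMap.toMatrix₂ (Basis.finTwoProd ℝ) (Basis.finTwoProd ℝ)
      (secondFormAlong x q (nrm x q)) := by
  have hx2 : DifferentiableAt ℝ (fderiv ℝ x) q :=
    (hx.fderiv_right (m := 1) le_rfl).differentiableAt one_ne_zero
  have hL : pt (pt x) q = fderiv ℝ (fderiv ℝ x) q (1, 0) (1, 0) :=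
    fderiv_fderiv_apply_right hx2 _ _
  have hM : ps (pt x) q = fderiv ℝ (fderiv ℝ x) q (0, 1) (1, 0) :=
    fderiv_fderiv_apply_right hx2 _ _
  have hN : ps (ps x) q = fderiv ℝ (fderiv ℝ x) q (0, 1) (0, 1) :=
    fderiv_fderiv_apply_right hx2 _ _
  have hsymm := hx.isSymmSndFDerivAt (by simp)
  ext i j
  fin_cases i <;> fin_cases j <;>
    simp [secondFF, coeffL, coeffM, coeffN, LinearMap.toMatrix₂_apply, secondFormAlong_apply,
      real_inner_comm, hL, hM, hN, hsymm (1, 0) (0, 1)]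

lemma secondFormAlong_comp {x : ℝ × ℝ → E3} {ψ : ℝ × ℝ → ℝ × ℝ} (hx : ContDiff ℝ 2 x)
    (hψ : ContDiff ℝ 2 ψ) (p : ℝ × ℝ) :
    secondFormAlong (x ∘ ψ) p (nrm x (ψ p)) =
      (secondFormAlong x (ψ p) (nrm x (ψ p))).compl₁₂ (fderiv ℝ ψ p : ℝ × ℝ →ₗ[ℝ] ℝ × ℝ)
        (fderiv ℝ ψ p : ℝ × ℝ →ₗ[ℝ] ℝ × ℝ) := by
  have hy2 : DifferentiableAt ℝ (fderiv ℝ (x ∘ ψ)) p :=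
    ((hx.comp hψ).fderiv_right (m := 1) le_rfl).differentiable one_ne_zero p
  refine LinearMap.ext₂ fun u v => ?_
  rw [LinearMap.compl₁₂_apply, secondFormAlong_apply, secondFormAlong_apply,
    ← fderiv_fderiv_apply_right hy2, fderiv_fderiv_comp_apply hx hψ, inner_add_right,
    real_inner_comm (fderiv ℝ x (ψ p) _), inner_fderiv_nrm, add_zero]
  rfl

lemma secondFF_comp {x : ℝ × ℝ → E3} {ψ : ℝ × ℝ → ℝ × ℝ} {p : ℝ × ℝ} (hx : ContDiff ℝ 2 x)
    (hψ : ContDiff ℝ 2 ψ) (hJ : 0 < (jac ψ p).det) :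
    secondFF (x ∘ ψ) p = (jac ψ p)ᵀ * secondFF x (ψ p) * jac ψ p := by
  rw [secondFF_eq_toMatrix₂ (hx.comp hψ).contDiffAt,
    nrm_comp (hx.differentiable two_ne_zero _) (hψ.differentiable two_ne_zero _) hJ,
    secondFormAlong_comp hx hψ,
    LinearMap.toMatrix₂_compl₁₂ (Basis.finTwoProd ℝ) (Basis.finTwoProd ℝ), ← jac_eq_toMatrix,
    ← secondFF_eq_toMatrix₂ hx.contDiffAt]

theorem weingarten_transform_under_reparametrization_general
    (x : ℝ × ℝ → E3) (hx : ContDiff ℝ 2 x)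
    (ψ : ℝ × ℝ → ℝ × ℝ) (hψ : ContDiff ℝ 2 ψ) (p : ℝ × ℝ)
    (hJ : 0 < (jac ψ p).det) :
    wein (x ∘ ψ) p = (jac ψ p)⁻¹ * wein x (ψ p) * jac ψ p := by
  rw [wein, wein,
    firstFF_comp (hx.differentiable two_ne_zero _) (hψ.differentiable two_ne_zero _),
    secondFF_comp hx hψ hJ, Matrix.inv_transpose_conj_mul_transpose_conj hJ.ne'.isUnit]

/-- the Weingarten matrix transforms as `W_y = J⁻¹ · W_x(ψ) · J`
under an orientation-preserving reparametrization `y = x ∘ ψ`. -/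
theorem weingarten_transform_under_reparametrization
    (x : ℝ × ℝ → E3) (hx : ContDiff ℝ 2 x)
    (ψ : ℝ × ℝ → ℝ × ℝ) (hψ : ContDiff ℝ 2 ψ) (p : ℝ × ℝ)
    (hJ : 0 < (jac ψ p).det)
    (hreg : cross (pt x (ψ p)) (ps x (ψ p)) ≠ 0) :
    wein (x ∘ ψ) p = (jac ψ p)⁻¹ * wein x (ψ p) * jac ψ p :=
  weingarten_transform_under_reparametrization_general x hx ψ hψ p hJ
end
end

section
/- Let p, q ∈ ℝ[t,s] be relatively prime polynomials (every common divisor of p and q is a unit) with q ≠ 0, and let η ∈ ℝ[t,s,u] be a polynomial such that η(t₀, s₀, p(t₀,s₀)/q(t₀,s₀)) = 0 for every (t₀,s₀) ∈ ℝ² with q(t₀,s₀) ≠ 0. Then the polynomial q·u − p divides η in ℝ[t,s,u]. -/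
/-!
Identify `ℝ[t,s,u]` with `A[u]`, `A = ℝ[t,s]`, and let `d = deg_u η`. Clearing denominators,
`q ^ d · η(p/q)` is the element `ζ = (scaleRoots η q)(p)` of `A`. By hypothesis `ζ · q`
vanishes at every real point, so `ζ = 0` and `p/q` is a root of `η` over `Frac A`. Hence
`q·u − p` divides `η` over `Frac A`, and as `q·u − p` is primitive (`p`, `q` coprime),
Gauss's lemma brings the divisibility down to `A[u]`.
-/

open MvPolynomial

namespace MvPolynomial

variable (R : Type*) [CommSemiring R] (n : ℕ)

noncomputable def lastVarEquiv :
    MvPolynomial (Fin (n + 1)) R ≃ₐ[R] Polynomial (MvPolynomial (Fin n) R) :=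
  (renameEquiv R finSuccEquivLast).trans (optionEquivLeft R (Fin n))

variable {R n}

theorem lastVarEquiv_rename_castSucc (a : MvPolynomial (Fin n) R) :
    lastVarEquiv R n (rename Fin.castSucc a) = Polynomial.C a := by
  induction a using MvPolynomial.induction_on with
  | C r => simp [lastVarEquiv, optionEquivLeft_C]
  | add f g hf hg => simp only [map_add, hf, hg]
  | mul_X f i hf =>
    rw [map_mul, map_mul, hf, rename_X]
    simp [lastVarEquiv, finSuccEquivLast_castSucc, optionEquivLeft_X_some]

theorem lastVarEquiv_X_last : lastVarEquiv R n (X (Fin.last n)) = Polynomial.X := by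
  simp [lastVarEquiv, finSuccEquivLast_last, optionEquivLeft_X_none]

theorem eval_snoc_eq_eval₂_lastVarEquiv (x : Fin n → R) (y : R)
    (f : MvPolynomial (Fin (n + 1)) R) :
    eval (Fin.snoc x y) f = (lastVarEquiv R n f).eval₂ (eval x) y := by
  have : (Fin.snoc x y : Fin (n + 1) → R) =
      (fun o ↦ Option.elim o y x) ∘ finSuccEquivLast := by
    ext i
    induction i using Fin.lastCases <;>
      simp [finSuccEquivLast_castSucc, finSuccEquivLast_last]
  rw [this, ← eval_rename, optionEquivLeft_elim_eval, Polynomial.eval_map]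
  rfl

end MvPolynomial

namespace Polynomial

theorem hom_eval_scaleRoots {A F : Type*} [CommRing A] [Field F] (g : A →+* F) (η : A[X])
    {p q : A} (hq : g q ≠ 0) :
    g ((η.scaleRoots q).eval p) = g q ^ η.natDegree * η.eval₂ g (g p / g q) := by
  rw [← eval₂_at_apply, ← scaleRoots_eval₂_mul, mul_div_cancel₀ _ hq]

theorem C_mul_X_sub_C_dvd_of_eval_scaleRoots_eq_zero {A : Type*} [CommRing A] [IsDomain A]
    [IsGCDMonoid A] {p q : A} (hpq : IsRelPrime p q) (hq : q ≠ 0) {η : A[X]}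
    (hη : (η.scaleRoots q).eval p = 0) : C q * X - C p ∣ η := by
  have hprim : (C q * X - C p).IsPrimitive := by
    intro r hr
    rw [C_dvd_iff_dvd_coeff] at hr
    exact hpq (by simpa using hr 0) (by simpa using hr 1)
  set φ := algebraMap A (FractionRing A)
  have hφq : φ q ≠ 0 := (map_ne_zero_iff φ (IsFractionRing.injective _ _)).mpr hq
  have hroot : (η.map φ).IsRoot (φ p / φ q) := by
    have := hom_eval_scaleRoots φ η (p := p) hφq
    rw [hη, map_zero, eq_comm, mul_eq_zero_iff_left (pow_ne_zero _ hφq)] at this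
    rwa [IsRoot, eval_map]
  refine hprim.dvd_of_fraction_map_dvd_fraction_map (K := FractionRing A) ?_
  have hf : (C q * X - C p).map φ = C (φ q) * (X - C (φ p / φ q)) := by
    simp [mul_sub, ← C_mul, mul_div_cancel₀ _ hφq]
  rw [hf]
  exact (isUnit_C.mpr hφq.isUnit).mul_left_dvd.mpr (dvd_iff_isRoot.mpr hroot)

end Polynomial

theorem MvPolynomial.eval_scaleRoots_eq_zero {K σ : Type*} [Field K] [Infinite K]
    {p q : MvPolynomial σ K} (hq : q ≠ 0) {η : Polynomial (MvPolynomial σ K)}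
    (hη : ∀ x, eval x q ≠ 0 → η.eval₂ (eval x) (eval x p / eval x q) = 0) :
    (η.scaleRoots q).eval p = 0 := by
  refine (mul_eq_zero.mp (MvPolynomial.funext fun x ↦ ?_)).resolve_right hq
  rw [map_mul, map_zero]
  by_cases hx : eval x q = 0
  · rw [hx, mul_zero]
  · rw [Polynomial.hom_eval_scaleRoots _ _ hx, hη x hx, mul_zero, zero_mul]

/-- Study's Lemma argument: if `η(t₀, s₀, p(t₀,s₀)/q(t₀,s₀)) = 0`
whenever `q(t₀,s₀) ≠ 0`, and `p, q` are relatively prime with `q ≠ 0`,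
then `q·u − p` divides `η` in `ℝ[t,s,u]`. -/
theorem dvd_of_vanishing_on_graph
    (p q : MvPolynomial (Fin 2) ℝ) (hpq : IsRelPrime p q) (hq : q ≠ 0)
    (η : MvPolynomial (Fin 3) ℝ)
    (hη : ∀ t₀ s₀ : ℝ, eval ![t₀, s₀] q ≠ 0 →
      eval ![t₀, s₀, eval ![t₀, s₀] p / eval ![t₀, s₀] q] η = 0) :
    rename (Fin.castSucc : Fin 2 → Fin 3) q * X 2 -
      rename (Fin.castSucc : Fin 2 → Fin 3) p ∣ η := by
  set e := lastVarEquiv ℝ 2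
  have he : e (rename Fin.castSucc q * X 2 - rename Fin.castSucc p) =
      Polynomial.C q * Polynomial.X - Polynomial.C p := by
    rw [map_sub, map_mul, lastVarEquiv_rename_castSucc, lastVarEquiv_rename_castSucc,
      show (2 : Fin 3) = Fin.last 2 from rfl, lastVarEquiv_X_last]
  suffices Polynomial.C q * Polynomial.X - Polynomial.C p ∣ e η by
    simpa [← he] using map_dvd e.symm this
  refine Polynomial.C_mul_X_sub_C_dvd_of_eval_scaleRoots_eq_zero hpq hq
    (eval_scaleRoots_eq_zero hq fun x hx ↦ ?_)
  obtain ⟨t₀, s₀, rfl⟩ : ∃ t₀ s₀ : ℝ, x = ![t₀, s₀] :=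
    ⟨x 0, x 1, by ext i; fin_cases i <;> rfl⟩
  have hsnoc (y : ℝ) : (Fin.snoc ![t₀, s₀] y : Fin 3 → ℝ) = ![t₀, s₀, y] := by
    ext i; fin_cases i <;> rfl
  rw [← eval_snoc_eq_eval₂_lastVarEquiv, hsnoc]
  exact hη t₀ s₀ hx
end

section
/- Let u, v : ℝ → ℝ³ be differentiable maps such that v(t) × v'(t) ≠ 0 for all t, let A be a real orthogonal 3×3 matrix and b ∈ ℝ³, and set ũ(t) = A·u(t) + b and ṽ(t) = A·v(t). Then ṽ(t) × ṽ'(t) ≠ 0 for all t, and the line of striction transforms equivariantly: c[ũ,ṽ](t) = A·c[u,v](t) + b for all t. (In particular, a Euclidean symmetry f(x) = Ax + b carrying the ruled parametrization u(t) + s·v(t) to ũ(t) + s·ṽ(t) maps the line of striction of the first onto the line of striction of the second.) -/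
open Matrix

noncomputable section

/-- The line of striction of the ruled parametrization `x(t,s) = u(t) + s·v(t)`. -/
def striction (u v : ℝ → E3) (t : ℝ) : E3 :=
  u t - ((inner ℝ (cross (v t) (deriv v t)) (cross (v t) (deriv u t)) : ℝ) /
    ‖cross (v t) (deriv v t)‖ ^ 2) • v t


/-! An orthogonal matrix `A` acts on `ℝ³` as a linear isometry with
`(A x) × (A y) = det A • A (x × y)` and `det A = ±1`, so the inner product and the norm of the
cross products in the striction coefficient are unchanged.
Since `A` is invertible it also commutes with `deriv`, even at points where a curve is not
differentiable (both sides are then `0`). Linearity of `A` then gives `c[Au, Av] = A c[u, v]`,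
and translating `u` by `b` leaves `u'` unchanged, so it translates the striction curve by `b`. -/

theorem ContinuousLinearEquiv.comp_deriv {𝕜 E F : Type*} [NontriviallyNormedField 𝕜]
    [NormedAddCommGroup E] [NormedSpace 𝕜 E] [NormedAddCommGroup F] [NormedSpace 𝕜 F]
    (e : E ≃L[𝕜] F) (f : 𝕜 → E) (x : 𝕜) : deriv (e ∘ f) x = e (deriv f x) :=
  congrArg (· 1) (e.comp_fderiv (f := f) (x := x))

theorem Matrix.crossProduct_mulVec_mulVec {R : Type*} [CommRing R] (A : Matrix (Fin 3) (Fin 3) R)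
    (x y : Fin 3 → R) : (A *ᵥ x) ⨯₃ (A *ᵥ y) = A.adjugateᵀ *ᵥ (x ⨯₃ y) := by
  ext i
  fin_cases i <;>
    simp [cross_apply, mulVec, adjugate_fin_three, dotProduct, Fin.sum_univ_three] <;> ring

section Orthogonal

variable {n R : Type*} [Fintype n] [DecidableEq n] [CommRing R]

theorem Matrix.adjugate_transpose_of_transpose_mul_self {A : Matrix n n R} (hA : Aᵀ * A = 1) :
    A.adjugateᵀ = A.det • A := by
  have hadj : A.adjugate = A.det • Aᵀ := calc
    A.adjugate = Aᵀ * A * A.adjugate := by rw [hA, Matrix.one_mul]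
    _ = A.det • Aᵀ := by rw [Matrix.mul_assoc, mul_adjugate, Matrix.mul_smul, Matrix.mul_one]
  rw [hadj, transpose_smul, transpose_transpose]

theorem Matrix.det_mul_self_of_transpose_mul_self {A : Matrix n n R} (hA : Aᵀ * A = 1) :
    A.det * A.det = 1 := by
  simpa [det_transpose] using congrArg det hA

def orthogonalIsometryEquiv (A : Matrix n n ℝ) (hA : Aᵀ * A = 1) :
    EuclideanSpace ℝ n ≃ₗᵢ[ℝ] EuclideanSpace ℝ n :=
  LinearEquiv.isometryOfInner
    (LinearEquiv.ofLinearMap (toEuclideanLin A) (toEuclideanLin Aᵀ)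
      (by rw [← toLpLin_mul_same, mul_eq_one_comm.mp hA, toLpLin_one])
      (by rw [← toLpLin_mul_same, hA, toLpLin_one]))
    (fun x y => by
      simp only [LinearEquiv.coe_ofLinearMap, EuclideanSpace.inner_eq_star_dotProduct,
        ofLp_toLpLin, toLin'_apply, star_trivial]
      rw [dotProduct_mulVec, ← vecMul_transpose, vecMul_vecMul, hA, vecMul_one])

end Orthogonal

section Striction

variable {A : Matrix (Fin 3) (Fin 3) ℝ}

theorem orthogonalIsometryEquiv_apply (hA : Aᵀ * A = 1) (x : E3) :
    orthogonalIsometryEquiv A hA x = mvec A x := rfl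

theorem cross_mvec_mvec (hA : Aᵀ * A = 1) (x y : E3) :
    cross (mvec A x) (mvec A y) = A.det • mvec A (cross x y) := by
  ext : 1
  simp only [cross, mvec, crossProduct_mulVec_mulVec, adjugate_transpose_of_transpose_mul_self hA,
    smul_mulVec, WithLp.ofLp_smul]

theorem inner_cross_mvec_mvec (hA : Aᵀ * A = 1) (x y z w : E3) :
    inner ℝ (cross (mvec A x) (mvec A y)) (cross (mvec A z) (mvec A w)) =
      inner ℝ (cross x y) (cross z w) := by
  rw [cross_mvec_mvec hA, cross_mvec_mvec hA, real_inner_smul_left, real_inner_smul_right,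
    ← mul_assoc, det_mul_self_of_transpose_mul_self hA, one_mul,
    ← orthogonalIsometryEquiv_apply hA, ← orthogonalIsometryEquiv_apply hA,
    LinearIsometryEquiv.inner_map_map]

theorem norm_cross_mvec_mvec (hA : Aᵀ * A = 1) (x y : E3) :
    ‖cross (mvec A x) (mvec A y)‖ = ‖cross x y‖ := by
  rw [norm_eq_sqrt_real_inner, norm_eq_sqrt_real_inner, inner_cross_mvec_mvec hA]

theorem deriv_mvec_comp (hA : Aᵀ * A = 1) (w : ℝ → E3) (t : ℝ) :
    deriv (fun τ => mvec A (w τ)) t = mvec A (deriv w t) :=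
  (orthogonalIsometryEquiv A hA).toContinuousLinearEquiv.comp_deriv w t

theorem striction_add_const (u v : ℝ → E3) (b : E3) (t : ℝ) :
    striction (fun τ => u τ + b) v t = striction u v t + b := by
  simp only [striction, deriv_add_const]
  abel

theorem striction_mvec_comp (hA : Aᵀ * A = 1) (u v : ℝ → E3) (t : ℝ) :
    striction (fun τ => mvec A (u τ)) (fun τ => mvec A (v τ)) t = mvec A (striction u v t) := by
  simp only [striction, deriv_mvec_comp hA, inner_cross_mvec_mvec hA, norm_cross_mvec_mvec hA]
  conv_rhs => rw [← orthogonalIsometryEquiv_apply hA, map_sub, map_smul]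
  rfl

end Striction

theorem striction_equivariant_general
    (u v : ℝ → E3)
    (hreg : ∀ t : ℝ, cross (v t) (deriv v t) ≠ 0)
    (A : Matrix (Fin 3) (Fin 3) ℝ) (hA : Aᵀ * A = 1) (b : E3) :
    (∀ t : ℝ, cross ((fun τ => mvec A (v τ)) t)
        (deriv (fun τ => mvec A (v τ)) t) ≠ 0) ∧
    (∀ t : ℝ, striction (fun τ => mvec A (u τ) + b) (fun τ => mvec A (v τ)) t =
        mvec A (striction u v t) + b) := by
  refine ⟨fun t => ?_, fun t => ?_⟩
  · rw [deriv_mvec_comp hA, ← norm_ne_zero_iff, norm_cross_mvec_mvec hA, norm_ne_zero_iff]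
    exact hreg t
  · rw [striction_add_const (fun τ => mvec A (u τ)), striction_mvec_comp hA]

/-- the line of striction transforms equivariantly under a
Euclidean symmetry `f(x) = A·x + b`. -/
theorem striction_equivariant
    (u v : ℝ → E3) (hu : Differentiable ℝ u) (hv : Differentiable ℝ v)
    (hreg : ∀ t : ℝ, cross (v t) (deriv v t) ≠ 0)
    (A : Matrix (Fin 3) (Fin 3) ℝ) (hA : Aᵀ * A = 1) (b : E3) :
    (∀ t : ℝ, cross ((fun τ => mvec A (v τ)) t)
        (deriv (fun τ => mvec A (v τ)) t) ≠ 0) ∧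
    (∀ t : ℝ, striction (fun τ => mvec A (u τ) + b) (fun τ => mvec A (v τ)) t =
        mvec A (striction u v t) + b) :=
  striction_equivariant_general u v hreg A hA b
end
end
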